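/- For every H with 0 < H < 1/2 and all u, v ≥ 0, (1+u)^{2H} + (1+v)^{2H} - (1+u+v)^{2H} - 1 ≤ 2H·√(u·v). -/
import Mathlib

lemma aux_bound (H u v : ℝ) (hH0 : 0 < H) (hH : H < 1 / 2)
    (hu : 0 ≤ u) (hv : 0 ≤ v) :
    (1 + u) ^ (2 * H) + (1 + v) ^ (2 * H) - (1 + u + v) ^ (2 * H) - 1 ≤ 2 * H * u := by
  have h1 : (1 + u) ^ (2 * H) ≤ 1 + (2 * H) * u :=
    rpow_one_add_le_one_add_mul_self (by linarith) (by linarith) (by linarith)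
  have h2 : (1 + v) ^ (2 * H) ≤ (1 + u + v) ^ (2 * H) :=
    Real.rpow_le_rpow (by linarith) (by linarith) (by linarith)
  linarith

/-- For `0 < H < 1/2` and `u, v ≥ 0`,
`(1+u)^(2H) + (1+v)^(2H) - (1+u+v)^(2H) - 1 ≤ 2H·u`. -/
theorem taylor_bound_sqrt (H u v : ℝ) (hH0 : 0 < H) (hH : H < 1 / 2)
    (hu : 0 ≤ u) (hv : 0 ≤ v) :
    (1 + u) ^ (2 * H) + (1 + v) ^ (2 * H) - (1 + u + v) ^ (2 * H) - 1 ≤ 2 * H * Real.sqrt (u * v) := by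
  rcases le_total u v with h | h
  · have hb := aux_bound H u v hH0 hH hu hv
    have : u ≤ Real.sqrt (u * v) :=
      (Real.sqrt_mul_self hu).symm.trans_le (Real.sqrt_le_sqrt (by nlinarith)) |>.trans_eq rfl
    nlinarith
  · have hb := aux_bound H v u hH0 hH hv hu
    have : v ≤ Real.sqrt (u * v) :=
      (Real.sqrt_mul_self hv).symm.trans_le (Real.sqrt_le_sqrt (by nlinarith))
    have heq : 1 + v + u = 1 + u + v := by ring
    rw [heq] at hb
    nlinarith
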